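/- Let f be a monotone normalized submodular function on V and S* an optimal solution to max_{|S| ≤ k} f(S). If S_g is the set produced by the greedy algorithm that iteratively adds the element with largest marginal gain for k steps, then f(S_g) ≥ (1 - (1 - 1/k)^k) f(S*) ≥ (1 - 1/e) f(S*). -/
import Mathlib


open Finset

theorem greedy_approximation_guarantee {V : Type*} [Fintype V] [DecidableEq V]
    (f : Finset V → ℝ)
    (hnorm : f ∅ = 0)
    (hmono : ∀ A B : Finset V, A ⊆ B → f A ≤ f B)
    (hsub : ∀ (A B : Finset V) (v : V), A ⊆ B → v ∉ B →
      f (insert v B) - f B ≤ f (insert v A) - f A)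
    (k : ℕ) (hk : 0 < k)
    (Sstar : Finset V) (hScard : Sstar.card ≤ k)
    (hSopt : ∀ S : Finset V, S.card ≤ k → f S ≤ f Sstar)
    (g : ℕ → Finset V) (hg0 : g 0 = ∅)
    (hgreedy : ∀ t < k, ∃ v : V, g (t + 1) = insert v (g t) ∧
      ∀ u : V, f (insert u (g t)) ≤ f (insert v (g t))) :
    f (g k) ≥ (1 - (1 - 1 / (k : ℝ)) ^ k) * f Sstar ∧
      (1 - (1 - 1 / (k : ℝ)) ^ k) * f Sstar ≥ (1 - 1 / Real.exp 1) * f Sstar := by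
  have hkR : (0:ℝ) < (k:ℝ) := by exact_mod_cast hk
  have hS0 : 0 ≤ f Sstar := by
    have := hmono ∅ Sstar (empty_subset _); linarith [hnorm ▸ this]
  have hc0 : (0:ℝ) ≤ 1 - 1/(k:ℝ) := by
    have : 1/(k:ℝ) ≤ 1 := by
      rw [div_le_one hkR]; exact_mod_cast hk
    linarith
  -- key submodularity lemma
  have key : ∀ (A D : Finset V), f (A ∪ D) ≤ f A + ∑ v ∈ D, (f (insert v A) - f A) := by
    intro A D
    induction D using Finset.induction_on with
    | empty => simp
    | @insert a D haD ih =>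
      rw [Finset.sum_insert haD, Finset.union_insert]
      by_cases ha : a ∈ A
      · have h1 : insert a (A ∪ D) = A ∪ D := insert_eq_self.2 (mem_union_left _ ha)
        have h2 : insert a A = A := insert_eq_self.2 ha
        rw [h1, h2]; linarith
      · have haAD : a ∉ A ∪ D := by simp [ha, haD]
        have h1 := hsub A (A ∪ D) a Finset.subset_union_left haAD
        linarith
  -- per-step bound
  have step : ∀ t < k, f Sstar - f (g t) ≤ (k:ℝ) * (f (g (t+1)) - f (g t)) := by
    intro t ht
    obtain ⟨v, hv1, hv2⟩ := hgreedy t ht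
    have hgap0 : 0 ≤ f (g (t+1)) - f (g t) := by
      rw [hv1]; linarith [hmono (g t) (insert v (g t)) (Finset.subset_insert _ _)]
    have hsubS : Sstar ⊆ g t ∪ (Sstar \ g t) := by
      intro x hx
      by_cases hxg : x ∈ g t
      · exact mem_union_left _ hxg
      · exact mem_union_right _ (mem_sdiff.2 ⟨hx, hxg⟩)
    have h1 : f Sstar ≤ f (g t) + ∑ u ∈ Sstar \ g t, (f (insert u (g t)) - f (g t)) :=
      le_trans (hmono _ _ hsubS) (key (g t) (Sstar \ g t))
    have h2 : ∑ u ∈ Sstar \ g t, (f (insert u (g t)) - f (g t))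
        ≤ ∑ _u ∈ Sstar \ g t, (f (g (t+1)) - f (g t)) := by
      apply Finset.sum_le_sum
      intro u _
      rw [hv1]; linarith [hv2 u]
    have h3 : ∑ _u ∈ Sstar \ g t, (f (g (t+1)) - f (g t))
        = ((Sstar \ g t).card : ℝ) * (f (g (t+1)) - f (g t)) := by
      rw [Finset.sum_const, nsmul_eq_mul]
    have hcard : ((Sstar \ g t).card : ℝ) ≤ (k:ℝ) := by
      exact_mod_cast le_trans (Finset.card_le_card (Finset.sdiff_subset)) hScard
    have h4 : ((Sstar \ g t).card : ℝ) * (f (g (t+1)) - f (g t))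
        ≤ (k:ℝ) * (f (g (t+1)) - f (g t)) := mul_le_mul_of_nonneg_right hcard hgap0
    linarith
  -- main induction
  have main : ∀ t, t ≤ k → f Sstar - f (g t) ≤ (1 - 1/(k:ℝ))^t * f Sstar := by
    intro t
    induction t with
    | zero => intro _; simp [hg0, hnorm]
    | succ n ih =>
      intro hn
      have hn' : n < k := hn
      have h1 := step n hn'
      have h2 := ih (le_of_lt hn')
      have hinv : 1/(k:ℝ) * (k:ℝ) = 1 := by field_simp
      have h3 : f Sstar - f (g (n+1)) ≤ (1 - 1/(k:ℝ)) * (f Sstar - f (g n)) := by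
        have hpos : (0:ℝ) ≤ 1/(k:ℝ) := by positivity
        have h1' := mul_le_mul_of_nonneg_left h1 hpos
        have heq : (1/(k:ℝ)) * ((k:ℝ) * (f (g (n+1)) - f (g n)))
            = f (g (n+1)) - f (g n) := by field_simp
        nlinarith [h1', heq]
      calc f Sstar - f (g (n+1)) ≤ (1 - 1/(k:ℝ)) * (f Sstar - f (g n)) := h3
        _ ≤ (1 - 1/(k:ℝ)) * ((1 - 1/(k:ℝ))^n * f Sstar) :=
            mul_le_mul_of_nonneg_left h2 hc0
        _ = (1 - 1/(k:ℝ))^(n+1) * f Sstar := by ring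
  have hmain := main k le_rfl
  constructor
  · nlinarith [hmain]
  · have hpow : (1 - 1/(k:ℝ))^k ≤ 1 / Real.exp 1 := by
      have h1 : 1 - 1/(k:ℝ) ≤ Real.exp (-(1/(k:ℝ))) := by
        have := Real.add_one_le_exp (-(1/(k:ℝ))); linarith
      have h2 : (1 - 1/(k:ℝ))^k ≤ (Real.exp (-(1/(k:ℝ))))^k :=
        pow_le_pow_left₀ hc0 h1 k
      have h3 : (Real.exp (-(1/(k:ℝ))))^k = Real.exp ((k:ℝ) * (-(1/(k:ℝ)))) :=
        (Real.exp_nat_mul _ _).symm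
      have h4 : (k:ℝ) * (-(1/(k:ℝ))) = -1 := by field_simp
      rw [h3, h4, Real.exp_neg] at h2
      exact le_trans h2 (by rw [one_div])
    have := mul_le_mul_of_nonneg_right (sub_le_sub_left hpow 1) hS0
    linarith
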